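/- Let S be a finite set with |S| ≥ 3 and an involution σ : S → S. Let z, w : S → ℙ¹(ℂ) be injective tuples satisfying conj(z_s) = z_{σ(s)} and conj(w_s) = w_{σ(s)} for all s ∈ S. If there exists g ∈ GL₂(ℂ) whose Möbius transformation maps z_s to w_s for every s ∈ S, then there exists h ∈ GL₂(ℝ) whose Möbius transformation maps z_s to w_s for every s ∈ S. -/

import Mathlib

open scoped Classical

noncomputable section

/-- Complex conjugation on `ℙ¹(ℂ) = ℂ ∪ {∞}` (the one-point compactification of `ℂ`),
fixing `∞`. -/
def conjP : OnePoint ℂ → OnePoint ℂ :=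
  fun z => Option.map (fun w => (starRingEnd ℂ) w) z

/-- `ℙ¹(ℝ) = ℝ ∪ {∞}` as a subset of `ℙ¹(ℂ)`. -/
def P1R : Set (OnePoint ℂ) :=
  insert OnePoint.infty {z : OnePoint ℂ | ∃ r : ℝ, z = ((r : ℂ) : OnePoint ℂ)}

/-- The Möbius transformation of `ℙ¹(ℂ)` associated to a 2×2 complex matrix
`m = !![a, b; c, d]`, i.e. `z ↦ (a z + b) / (c z + d)` extended to `∞` as usual. -/
def moeb (m : Matrix (Fin 2) (Fin 2) ℂ) : OnePoint ℂ → OnePoint ℂ :=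
  fun z =>
    Option.rec (motive := fun _ => OnePoint ℂ)
      (if m 1 0 = 0 then OnePoint.infty
       else ((m 0 0 / m 1 0 : ℂ) : OnePoint ℂ))
      (fun w =>
        if m 1 0 * w + m 1 1 = 0 then OnePoint.infty
        else (((m 0 0 * w + m 0 1) / (m 1 0 * w + m 1 1) : ℂ) : OnePoint ℂ))
      z

/-- The Möbius action of `SL₂(ℝ)` on `ℙ¹(ℂ)` (a real matrix acts through its
complexification). -/
def moebSL (g : Matrix.SpecialLinearGroup (Fin 2) ℝ) : OnePoint ℂ → OnePoint ℂ :=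
  moeb ((g : Matrix (Fin 2) (Fin 2) ℝ).map Complex.ofReal)

/-- The configuration space `Conf⁺_{(F,ϱ)}`: injective tuples `(z_f)_{f ∈ F}` in `ℙ¹(ℂ)`
with `z_f ∈ ℙ¹(ℝ)` for fixed points `f` of `ϱ`, and `z_f ∉ ℙ¹(ℝ)`, `z_{ϱ f} = conj (z_f)`
for non-fixed `f`.  As a set of functions it carries the subspace topology of the
product topology. -/
def ConfPlus (F : Type) (ϱ : F → F) : Set (F → OnePoint ℂ) :=
  {z | Function.Injective z ∧ (∀ f, ϱ f = f → z f ∈ P1R) ∧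
       (∀ f, ϱ f ≠ f → z f ∉ P1R ∧ z (ϱ f) = conjP (z f))}

/-- The antipodal involution `z ↦ -1/z̄` of `ℙ¹(ℂ)`, interchanging `0` and `∞`. -/
def antip : OnePoint ℂ → OnePoint ℂ :=
  fun z =>
    Option.rec (motive := fun _ => OnePoint ℂ) (((0 : ℂ) : OnePoint ℂ))
      (fun w =>
        if w = 0 then OnePoint.infty
        else (((-1) / (starRingEnd ℂ) w : ℂ) : OnePoint ℂ))
      z

/-- The configuration space `Conf^∅_{(F,ϱ)}`: injective tuples `(z_f)_{f ∈ F}` in `ℙ¹(ℂ)`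
with `z_{ϱ f} = -1/z̄_f` for all `f`. -/
def ConfEmpty (F : Type) (ϱ : F → F) : Set (F → OnePoint ℂ) :=
  {z | Function.Injective z ∧ ∀ f, z (ϱ f) = antip (z f)}

/-- The orbit relation of the diagonal `SL₂(ℝ)` Möbius action on `Conf⁺_{(F,ϱ)}`;
`Quot (slRel F ϱ)` is the quotient `Conf⁺_{(F,ϱ)}/SL₂(ℝ)` with the quotient topology. -/
def slRel (F : Type) (ϱ : F → F) (x y : ↥(ConfPlus F ϱ)) : Prop :=
  ∃ g : Matrix.SpecialLinearGroup (Fin 2) ℝ, ∀ f, moebSL g (x.1 f) = y.1 f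

/-- The orbit relation of the diagonal `SU(2)` Möbius action on `Conf^∅_{(F,ϱ)}`;
`Quot (suRel F ϱ)` is the quotient `Conf^∅_{(F,ϱ)}/SU(2)` with the quotient topology. -/
def suRel (F : Type) (ϱ : F → F) (x y : ↥(ConfEmpty F ϱ)) : Prop :=
  ∃ g : Matrix.specialUnitaryGroup (Fin 2) ℂ,
    ∀ f, moeb (g : Matrix (Fin 2) (Fin 2) ℂ) (x.1 f) = y.1 f

/-- The negation map `e : (z_f) ↦ (-z_f)` on tuples in `ℙ¹(ℂ)` (with `-∞ = ∞`). -/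
def negP : OnePoint ℂ → OnePoint ℂ :=
  fun z => Option.map (fun w => -w) z

lemma onePoint_cases (x : OnePoint ℂ) : x = OnePoint.infty ∨ ∃ v : ℂ, x = (v : OnePoint ℂ) := by
  cases x with
  | infty => exact Or.inl rfl
  | coe v => exact Or.inr ⟨v, rfl⟩

lemma moeb_coe (m : Matrix (Fin 2) (Fin 2) ℂ) (v : ℂ) :
    moeb m (v : OnePoint ℂ) = if m 1 0 * v + m 1 1 = 0 then OnePoint.infty
      else (((m 0 0 * v + m 0 1) / (m 1 0 * v + m 1 1) : ℂ) : OnePoint ℂ) := rfl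

lemma moeb_infty' (m : Matrix (Fin 2) (Fin 2) ℂ) :
    moeb m OnePoint.infty = if m 1 0 = 0 then OnePoint.infty
      else ((m 0 0 / m 1 0 : ℂ) : OnePoint ℂ) := rfl

lemma conjP_coe (v : ℂ) : conjP (v : OnePoint ℂ) = (((starRingEnd ℂ) v : ℂ) : OnePoint ℂ) := rfl

lemma conjP_infty : conjP OnePoint.infty = OnePoint.infty := rfl

lemma conjP_conjP (x : OnePoint ℂ) : conjP (conjP x) = x := by
  rcases onePoint_cases x with rfl | ⟨v, rfl⟩
  · rfl
  · rw [conjP_coe, conjP_coe, Complex.conj_conj]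

lemma moeb_one (x : OnePoint ℂ) : moeb 1 x = x := by
  rcases onePoint_cases x with rfl | ⟨v, rfl⟩
  · rw [moeb_infty']; simp [Matrix.one_apply]
  · rw [moeb_coe]; simp [Matrix.one_apply]

lemma moeb_smul (c : ℂ) (hc : c ≠ 0) (m : Matrix (Fin 2) (Fin 2) ℂ) (x : OnePoint ℂ) :
    moeb (c • m) x = moeb m x := by
  rcases onePoint_cases x with rfl | ⟨v, rfl⟩
  · rw [moeb_infty', moeb_infty']
    simp only [Matrix.smul_apply, smul_eq_mul]
    by_cases h : m 1 0 = 0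
    · rw [if_pos (by rw [h, mul_zero]), if_pos h]
    · rw [if_neg (mul_ne_zero hc h), if_neg h, mul_div_mul_left _ _ hc]
  · rw [moeb_coe, moeb_coe]
    simp only [Matrix.smul_apply, smul_eq_mul]
    have key : c * m 1 0 * v + c * m 1 1 = c * (m 1 0 * v + m 1 1) := by ring
    have key2 : c * m 0 0 * v + c * m 0 1 = c * (m 0 0 * v + m 0 1) := by ring
    by_cases h : m 1 0 * v + m 1 1 = 0
    · rw [if_pos (by rw [key, h, mul_zero]), if_pos h]
    · rw [if_neg (by rw [key]; exact mul_ne_zero hc h), if_neg h]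
      rw [key, key2, mul_div_mul_left _ _ hc]

lemma moeb_conj (m : Matrix (Fin 2) (Fin 2) ℂ) (x : OnePoint ℂ) :
    moeb (m.map (starRingEnd ℂ)) (conjP x) = conjP (moeb m x) := by
  rcases onePoint_cases x with rfl | ⟨v, rfl⟩
  · rw [conjP_infty, moeb_infty', moeb_infty']
    simp only [Matrix.map_apply]
    by_cases h : m 1 0 = 0
    · rw [if_pos h, conjP_infty]
      simp [h, Matrix.map_apply]
    · rw [if_neg h, conjP_coe, map_div₀]
      simp [h, Matrix.map_apply]
  · rw [conjP_coe, moeb_coe, moeb_coe]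
    simp only [Matrix.map_apply]
    have k : ∀ a b : ℂ, (starRingEnd ℂ) a * (starRingEnd ℂ) v + (starRingEnd ℂ) b
        = (starRingEnd ℂ) (a * v + b) := by
      intro a b; rw [map_add, map_mul]
    simp only [k]
    by_cases h : m 1 0 * v + m 1 1 = 0
    · rw [if_pos (by rw [h, map_zero] : (starRingEnd ℂ) (m 1 0 * v + m 1 1) = 0), if_pos h, conjP_infty]
    · rw [if_neg (fun hh => h ((starRingEnd ℂ).injective (by rw [hh, map_zero])) : (starRingEnd ℂ) (m 1 0 * v + m 1 1) ≠ 0), if_neg h, conjP_coe, map_div₀]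

lemma moeb_mul (m n : Matrix (Fin 2) (Fin 2) ℂ) (hn : n.det ≠ 0) (x : OnePoint ℂ) :
    moeb (m * n) x = moeb m (moeb n x) := by
  rw [Matrix.det_fin_two] at hn
  have hmn : ∀ i j, (m * n) i j = m i 0 * n 0 j + m i 1 * n 1 j := fun i j => by
    rw [Matrix.mul_apply, Fin.sum_univ_two]
  rcases onePoint_cases x with rfl | ⟨v, rfl⟩
  · rw [moeb_infty' n]
    by_cases h10 : n 1 0 = 0
    · have h00 : n 0 0 ≠ 0 := fun h => hn (by rw [h, h10]; ring)
      rw [if_pos h10, moeb_infty', moeb_infty']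
      simp only [hmn, h10]
      by_cases hm : m 1 0 = 0
      · rw [if_pos (by rw [hm]; ring), if_pos hm]
      · rw [if_neg (by simpa [h00] using hm), if_neg hm]
        rw [OnePoint.coe_eq_coe]
        field_simp
        ring
    · rw [if_neg h10, moeb_infty', moeb_coe]
      simp only [hmn]
      have key : m 1 0 * (n 0 0 / n 1 0) + m 1 1
          = (m 1 0 * n 0 0 + m 1 1 * n 1 0) / n 1 0 := by field_simp
      rw [key]
      by_cases hc : m 1 0 * n 0 0 + m 1 1 * n 1 0 = 0
      · rw [if_pos hc, if_pos (by rw [hc, zero_div])]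
      · rw [if_neg hc, if_neg (div_ne_zero hc h10), OnePoint.coe_eq_coe]
        field_simp
  · rw [moeb_coe n]
    by_cases ht : n 1 0 * v + n 1 1 = 0
    · have hu : n 0 0 * v + n 0 1 ≠ 0 := by
        intro h
        exact hn (by linear_combination n 0 0 * ht - n 1 0 * h)
      rw [if_pos ht, moeb_infty', moeb_coe]
      simp only [hmn]
      have c2 : (m 1 0 * n 0 0 + m 1 1 * n 1 0) * v + (m 1 0 * n 0 1 + m 1 1 * n 1 1)
          = m 1 0 * (n 0 0 * v + n 0 1) := by linear_combination m 1 1 * ht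
      have c1 : (m 0 0 * n 0 0 + m 0 1 * n 1 0) * v + (m 0 0 * n 0 1 + m 0 1 * n 1 1)
          = m 0 0 * (n 0 0 * v + n 0 1) := by linear_combination m 0 1 * ht
      rw [c1, c2]
      by_cases hm : m 1 0 = 0
      · rw [if_pos (by rw [hm, zero_mul]), if_pos hm]
      · rw [if_neg (mul_ne_zero hm hu), if_neg hm, OnePoint.coe_eq_coe,
          mul_div_mul_right _ _ hu]
    · rw [if_neg ht, moeb_coe, moeb_coe]
      simp only [hmn]
      have key : m 1 0 * ((n 0 0 * v + n 0 1) / (n 1 0 * v + n 1 1)) + m 1 1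
          = ((m 1 0 * n 0 0 + m 1 1 * n 1 0) * v + (m 1 0 * n 0 1 + m 1 1 * n 1 1))
            / (n 1 0 * v + n 1 1) := by
          rw [eq_div_iff ht, add_mul, mul_div_assoc', div_mul_cancel₀ _ ht]; ring
      rw [key]
      by_cases hc : (m 1 0 * n 0 0 + m 1 1 * n 1 0) * v + (m 1 0 * n 0 1 + m 1 1 * n 1 1) = 0
      · rw [if_pos hc, if_pos (by rw [hc, zero_div])]
      · rw [if_neg hc, if_neg (div_ne_zero hc ht), OnePoint.coe_eq_coe]
        field_simp
        ring

lemma fix_infty (m : Matrix (Fin 2) (Fin 2) ℂ) (h : moeb m OnePoint.infty = OnePoint.infty) :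
    m 1 0 = 0 := by
  by_contra hm
  rw [moeb_infty', if_neg hm] at h
  exact OnePoint.coe_ne_infty _ h

lemma fix_coe (m : Matrix (Fin 2) (Fin 2) ℂ) (v : ℂ)
    (h : moeb m (v : OnePoint ℂ) = (v : OnePoint ℂ)) :
    m 1 0 * v ^ 2 + (m 1 1 - m 0 0) * v - m 0 1 = 0 := by
  rw [moeb_coe] at h
  by_cases hc : m 1 0 * v + m 1 1 = 0
  · rw [if_pos hc] at h; exact absurd h (OnePoint.infty_ne_coe _)
  · rw [if_neg hc, OnePoint.coe_eq_coe, div_eq_iff hc] at h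
    linear_combination -h

lemma quad_zero (a b c x1 x2 x3 : ℂ) (h12 : x1 ≠ x2) (h13 : x1 ≠ x3) (h23 : x2 ≠ x3)
    (e1 : a * x1 ^ 2 + b * x1 + c = 0) (e2 : a * x2 ^ 2 + b * x2 + c = 0)
    (e3 : a * x3 ^ 2 + b * x3 + c = 0) : a = 0 ∧ b = 0 ∧ c = 0 := by
  have d12 : (x1 - x2) * (a * (x1 + x2) + b) = 0 := by linear_combination e1 - e2
  have d13 : (x1 - x3) * (a * (x1 + x3) + b) = 0 := by linear_combination e1 - e3
  have f12 : a * (x1 + x2) + b = 0 :=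
    (mul_eq_zero.mp d12).resolve_left (fun h => h12 (sub_eq_zero.mp h))
  have f13 : a * (x1 + x3) + b = 0 :=
    (mul_eq_zero.mp d13).resolve_left (fun h => h13 (sub_eq_zero.mp h))
  have hd : (x2 - x3) * a = 0 := by linear_combination f12 - f13
  have ha : a = 0 := (mul_eq_zero.mp hd).resolve_left (fun h => h23 (sub_eq_zero.mp h))
  have hb : b = 0 := by linear_combination f12 - (x1 + x2) * ha
  exact ⟨ha, hb, by linear_combination e1 - x1 ^ 2 * ha - x1 * hb⟩

lemma scalar_two (m : Matrix (Fin 2) (Fin 2) ℂ) (hdet : m.det ≠ 0) (h10 : m 1 0 = 0)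
    (v1 v2 : ℂ) (hne : v1 ≠ v2)
    (f1 : moeb m (v1 : OnePoint ℂ) = (v1 : OnePoint ℂ))
    (f2 : moeb m (v2 : OnePoint ℂ) = (v2 : OnePoint ℂ)) :
    ∃ c : ℂ, c ≠ 0 ∧ m = c • (1 : Matrix (Fin 2) (Fin 2) ℂ) := by
  rw [Matrix.det_fin_two] at hdet
  have e1 := fix_coe m v1 f1
  have e2 := fix_coe m v2 f2
  have g1 : (m 1 1 - m 0 0) * v1 - m 0 1 = 0 := by linear_combination e1 - v1 ^ 2 * h10
  have g2 : (m 1 1 - m 0 0) * v2 - m 0 1 = 0 := by linear_combination e2 - v2 ^ 2 * h10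
  have hd : (m 1 1 - m 0 0) * (v1 - v2) = 0 := by linear_combination g1 - g2
  have heq : m 1 1 = m 0 0 := by
    rcases mul_eq_zero.mp hd with h | h
    · linear_combination h
    · exact absurd (sub_eq_zero.mp h) hne
  have h01 : m 0 1 = 0 := by linear_combination v1 * heq - g1
  refine ⟨m 0 0, fun h => hdet (by rw [heq, h, h01, h10]; ring), ?_⟩
  ext i j
  fin_cases i <;> fin_cases j <;>
    simp [Matrix.smul_apply, Matrix.one_apply, smul_eq_mul, h10, h01, heq]

lemma coe_ne_of_ne {a b : ℂ} (h : (a : OnePoint ℂ) ≠ (b : OnePoint ℂ)) : a ≠ b :=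
  fun hh => h (by rw [hh])

lemma scalar_of_fix3 (m : Matrix (Fin 2) (Fin 2) ℂ) (hdet : m.det ≠ 0)
    (p1 p2 p3 : OnePoint ℂ) (h12 : p1 ≠ p2) (h13 : p1 ≠ p3) (h23 : p2 ≠ p3)
    (f1 : moeb m p1 = p1) (f2 : moeb m p2 = p2) (f3 : moeb m p3 = p3) :
    ∃ c : ℂ, c ≠ 0 ∧ m = c • (1 : Matrix (Fin 2) (Fin 2) ℂ) := by
  rcases onePoint_cases p1 with rfl | ⟨v1, rfl⟩
  · rcases onePoint_cases p2 with rfl | ⟨v2, rfl⟩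
    · exact absurd rfl h12
    rcases onePoint_cases p3 with rfl | ⟨v3, rfl⟩
    · exact absurd rfl h13
    exact scalar_two m hdet (fix_infty m f1) v2 v3 (coe_ne_of_ne h23) f2 f3
  · rcases onePoint_cases p2 with rfl | ⟨v2, rfl⟩
    · rcases onePoint_cases p3 with rfl | ⟨v3, rfl⟩
      · exact absurd rfl h23
      exact scalar_two m hdet (fix_infty m f2) v1 v3 (coe_ne_of_ne h13) f1 f3
    · rcases onePoint_cases p3 with rfl | ⟨v3, rfl⟩
      · exact scalar_two m hdet (fix_infty m f3) v1 v2 (coe_ne_of_ne h12) f1 f2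
      · have e1 := fix_coe m v1 f1
        have e2 := fix_coe m v2 f2
        have e3 := fix_coe m v3 f3
        obtain ⟨ha, _, _⟩ := quad_zero (m 1 0) (m 1 1 - m 0 0) (-(m 0 1)) v1 v2 v3
          (coe_ne_of_ne h12) (coe_ne_of_ne h13) (coe_ne_of_ne h23)
          (by linear_combination e1) (by linear_combination e2) (by linear_combination e3)
        exact scalar_two m hdet ha v1 v2 (coe_ne_of_ne h12) f1 f2
/-- if two injective `conj`-equivariant tuples on `ℙ¹(ℂ)` labeled by `S`,
`|S| ≥ 3`, are related by a Möbius transformation from `GL₂(ℂ)`, then they are related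
by a Möbius transformation from `GL₂(ℝ)`. -/
theorem stmt12 (S : Type) [Fintype S] (hS : 3 ≤ Nat.card S) (σ : S → S)
    (hσ : Function.Involutive σ) (z w : S → OnePoint ℂ)
    (hz : Function.Injective z) (hw : Function.Injective w)
    (hze : ∀ s, conjP (z s) = z (σ s)) (hwe : ∀ s, conjP (w s) = w (σ s))
    (hg : ∃ g : Matrix.GeneralLinearGroup (Fin 2) ℂ,
      ∀ s, moeb (g : Matrix (Fin 2) (Fin 2) ℂ) (z s) = w s) :
    ∃ h : Matrix.GeneralLinearGroup (Fin 2) ℝ,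
      ∀ s, moeb (((h : Matrix (Fin 2) (Fin 2) ℝ)).map Complex.ofReal) (z s) = w s := by
  obtain ⟨g, hgz⟩ := hg
  set G : Matrix (Fin 2) (Fin 2) ℂ := (g : Matrix (Fin 2) (Fin 2) ℂ) with hGdef
  have hGunit : IsUnit G := ⟨g, rfl⟩
  have hdetGu : IsUnit G.det := (Matrix.isUnit_iff_isUnit_det G).mp hGunit
  have hdetG : G.det ≠ 0 := hdetGu.ne_zero
  set Gc : Matrix (Fin 2) (Fin 2) ℂ := G.map (starRingEnd ℂ) with hGcdef
  have hdetGc : Gc.det ≠ 0 := by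
    have hmapdet : (starRingEnd ℂ) G.det = Gc.det := RingHom.map_det _ G
    intro h
    exact hdetG ((starRingEnd ℂ).injective (by rw [hmapdet, h, map_zero]))
  have hconj : ∀ s, moeb Gc (z s) = w s := by
    intro s
    have h1 : conjP (z (σ s)) = z s := by
      have := hze (σ s); rwa [hσ s] at this
    have h2 : conjP (w (σ s)) = w s := by
      have := hwe (σ s); rwa [hσ s] at this
    calc moeb Gc (z s) = moeb Gc (conjP (z (σ s))) := by rw [h1]
      _ = conjP (moeb G (z (σ s))) := moeb_conj G _
      _ = conjP (w (σ s)) := by rw [hgz]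
      _ = w s := h2
  have hNfix : ∀ s, moeb (G⁻¹ * Gc) (z s) = z s := by
    intro s
    rw [moeb_mul _ _ hdetGc, hconj s, ← hgz s, ← moeb_mul _ _ hdetG,
      Matrix.nonsing_inv_mul G hdetGu]
    exact moeb_one _
  have hdetN : (G⁻¹ * Gc).det ≠ 0 := by
    rw [Matrix.det_mul, Matrix.det_nonsing_inv]
    exact mul_ne_zero (by simpa using hdetG) hdetGc
  have hcard : 3 ≤ Fintype.card S := by rwa [Nat.card_eq_fintype_card] at hS
  obtain ⟨e⟩ : Nonempty (Fin 3 ↪ S) :=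
    Function.Embedding.nonempty_of_card_le (by simpa using hcard)
  have hzne : ∀ i j : Fin 3, i ≠ j → z (e i) ≠ z (e j) := by
    intro i j hij h
    exact hij (e.injective (hz h))
  obtain ⟨c, hc0, hcN⟩ := scalar_of_fix3 _ hdetN (z (e 0)) (z (e 1)) (z (e 2))
    (hzne 0 1 (by decide)) (hzne 0 2 (by decide)) (hzne 1 2 (by decide))
    (hNfix _) (hNfix _) (hNfix _)
  have hGc_eq : Gc = c • G := by
    have h1 : G * (G⁻¹ * Gc) = Gc := by
      rw [← mul_assoc, Matrix.mul_nonsing_inv G hdetGu, one_mul]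
    rw [← h1, hcN, Matrix.mul_smul, mul_one]
  have hGcij : ∀ i j, (starRingEnd ℂ) (G i j) = c * G i j := by
    intro i j
    have h2 : Gc i j = (c • G) i j := by rw [hGc_eq]
    simpa [hGcdef, Matrix.map_apply, Matrix.smul_apply, smul_eq_mul] using h2
  have hGne : G ≠ 0 := fun h => hdetG (by rw [h]; exact Matrix.det_zero)
  have hGback : G = ((starRingEnd ℂ) c * c) • G := by
    ext i j
    have h3 := congrArg (starRingEnd ℂ) (hGcij i j)
    rw [Complex.conj_conj, map_mul, hGcij i j] at h3
    simpa [Matrix.smul_apply, smul_eq_mul, mul_assoc] using h3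
  have hnorm : (starRingEnd ℂ) c * c = 1 := by
    have h2 : ((starRingEnd ℂ) c * c - 1) • G = 0 := by
      rw [sub_smul, one_smul, ← hGback, sub_self]
    rcases smul_eq_zero.mp h2 with h | h
    · exact sub_eq_zero.mp h
    · exact absurd h hGne
  obtain ⟨μ, hμ⟩ := IsAlgClosed.exists_pow_nat_eq c (n := 2) (by norm_num)
  have hμ0 : μ ≠ 0 := fun h => hc0 (by rw [← hμ, h]; ring)
  have hμμ : (starRingEnd ℂ) μ * μ = 1 := by
    have h3 : (starRingEnd ℂ) μ * μ = (Complex.normSq μ : ℂ) := by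
      rw [mul_comm, Complex.mul_conj]
    have h2 : ((starRingEnd ℂ) μ * μ) ^ 2 = 1 := by
      rw [mul_pow, ← map_pow, hμ, hnorm]
    rw [h3] at h2 ⊢
    have h4 : (Complex.normSq μ : ℝ) ^ 2 = 1 := by exact_mod_cast h2
    have h5 : Complex.normSq μ = 1 := by nlinarith [Complex.normSq_nonneg μ]
    rw [h5]; norm_num
  have hμc : (starRingEnd ℂ) μ * c = μ := by
    calc (starRingEnd ℂ) μ * c = (starRingEnd ℂ) μ * μ * μ := by rw [← hμ]; ring
      _ = μ := by rw [hμμ, one_mul]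
  set H : Matrix (Fin 2) (Fin 2) ℂ := μ • G with hHdef
  have hHreal : ∀ i j, (starRingEnd ℂ) (H i j) = H i j := by
    intro i j
    simp only [hHdef, Matrix.smul_apply, smul_eq_mul, map_mul, hGcij i j]
    linear_combination G i j * hμc
  set R : Matrix (Fin 2) (Fin 2) ℝ := Matrix.of (fun i j => (H i j).re) with hRdef
  have hRmap : R.map Complex.ofReal = H := by
    ext i j
    simp only [Matrix.map_apply, hRdef, Matrix.of_apply]
    exact Complex.conj_eq_iff_re.mp (hHreal i j)
  have hdetH : H.det ≠ 0 := by
    rw [hHdef, Matrix.det_smul]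
    exact mul_ne_zero (pow_ne_zero _ hμ0) hdetG
  have hdetR : R.det ≠ 0 := by
    intro h
    apply hdetH
    rw [← hRmap, show R.map Complex.ofReal = Complex.ofRealHom.mapMatrix R from rfl,
      ← RingHom.map_det, h, map_zero]
  have hRunit : IsUnit R := (Matrix.isUnit_iff_isUnit_det R).mpr (isUnit_iff_ne_zero.mpr hdetR)
  refine ⟨hRunit.unit, fun s => ?_⟩
  show moeb ((R : Matrix (Fin 2) (Fin 2) ℝ).map Complex.ofReal) (z s) = w s
  rw [hRmap, hHdef, moeb_smul μ hμ0, hgz s]
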